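/- arXiv:2201.08869 — 2 statements merged into one kernel-verified Lean document; each statement's English description precedes it below -/
import Mathlib

section
/- Let α ≤ β be rank-r ramification sequences. Then β/α is a 2-link if and only if both of the following hold: (1) there exist indices 0 ≤ j < k ≤ r such that β_j = α_j + 1, β_k = α_k + 1, and β_i = α_i for all other indices i; and (2) letting Λ = {n ∈ ℤ : n ≡ α_j + j + 1 (mod (α_k + k) − (α_j + j))}, the only elements of Λ lying in the loose set of α are α_j + j + 1 and α_k + k + 1. -/
/-- An arithmetic progression: a proper subset of `ℤ` that is empty, a singleton,
or of the form `n + mℤ` with `m ≥ 2`. -/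
def IsAP (Λ : Set ℤ) : Prop :=
  Λ ≠ Set.univ ∧
    (Λ = ∅ ∨ (∃ n : ℤ, Λ = {n}) ∨
      ∃ n m : ℤ, 2 ≤ m ∧ Λ = {x : ℤ | ∃ k : ℤ, x = n + m * k})
/-- `α i` is increasable: the sequence stays nondecreasing after increasing entry `i` by 1. -/
def Increasable {m : ℕ} (α : Fin m → ℤ) (i : Fin m) : Prop :=
  Monotone (Function.update α i (α i + 1))

/-- `α i` is decreasable: the sequence stays nondecreasing after decreasing entry `i` by 1. -/
def Decreasable {m : ℕ} (α : Fin m → ℤ) (i : Fin m) : Prop :=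
  Monotone (Function.update α i (α i - 1))

open Classical in
/-- Upward displacement of a ramification sequence along `Λ`. -/
noncomputable def dispPlus {m : ℕ} (Λ : Set ℤ) (α : Fin m → ℤ) : Fin m → ℤ :=
  fun i => if Increasable α i ∧ α i + (i.val : ℤ) + 1 ∈ Λ then α i + 1 else α i

open Classical in
/-- Downward displacement of a ramification sequence along `Λ`. -/
noncomputable def dispMinus {m : ℕ} (Λ : Set ℤ) (α : Fin m → ℤ) : Fin m → ℤ :=
  fun i => if Decreasable α i ∧ α i + (i.val : ℤ) ∈ Λ then α i - 1 else α i
/-- `α` and `β` are linked by `Λ` if `α = disp⁻_Λ(β)` and `β = disp⁺_Λ(α)`. -/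
def LinkedBy {m : ℕ} (Λ : Set ℤ) (α β : Fin m → ℤ) : Prop :=
  α = dispMinus Λ β ∧ β = dispPlus Λ α

/-- `α` and `β` are linked if they are linked by some arithmetic progression. -/
def Linked {m : ℕ} (α β : Fin m → ℤ) : Prop :=
  ∃ Λ : Set ℤ, IsAP Λ ∧ LinkedBy Λ α β

/-- The size `|β / α|` of the skew shape `β / α`. -/
def skewSize {m : ℕ} (α β : Fin m → ℤ) : ℤ := ∑ i, (β i - α i)

/-- `β / α` is an `n`-link: `α, β` are linked and `|β / α| = n`. -/
def IsNLink (n : ℤ) {m : ℕ} (α β : Fin m → ℤ) : Prop :=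
  Linked α β ∧ skewSize α β = n
/-- The loose set of a ramification sequence `α`:
`{α i + i : α i decreasable} ∪ {α i + i + 1 : α i increasable}`. -/
def looseSet {m : ℕ} (α : Fin m → ℤ) : Set ℤ :=
  {x | ∃ i, (Decreasable α i ∧ x = α i + (i.val : ℤ)) ∨
            (Increasable α i ∧ x = α i + (i.val : ℤ) + 1)}


section TwoLinkHelpers

variable {N : ℕ}

lemma monotone_update_iff {α : Fin N → ℤ} (hα : Monotone α) {i : Fin N} {c : ℤ} :
    Monotone (Function.update α i c) ↔ (∀ l, l < i → α l ≤ c) ∧ (∀ l, i < l → c ≤ α l) := by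
  constructor
  · intro h
    refine ⟨fun l hl => ?_, fun l hl => ?_⟩
    · have := h hl.le
      rwa [Function.update_self, Function.update_of_ne hl.ne] at this
    · have := h hl.le
      rwa [Function.update_self, Function.update_of_ne hl.ne'] at this
  · rintro ⟨h1, h2⟩ u v huv
    by_cases hu : u = i <;> by_cases hv : v = i
    · subst hu; subst hv; exact le_rfl
    · subst hu
      rw [Function.update_self, Function.update_of_ne hv]
      exact h2 v (lt_of_le_of_ne huv (Ne.symm hv))
    · subst hv
      rw [Function.update_self, Function.update_of_ne hu]
      exact h1 u (lt_of_le_of_ne huv hu)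
    · rw [Function.update_of_ne hu, Function.update_of_ne hv]
      exact hα huv

lemma inc_iff {α : Fin N → ℤ} (hα : Monotone α) {i : Fin N} :
    Increasable α i ↔ ∀ l, i < l → α i + 1 ≤ α l := by
  rw [Increasable, monotone_update_iff hα]
  constructor
  · exact fun h => h.2
  · exact fun h => ⟨fun l hl => by have := hα hl.le; linarith, h⟩

lemma dec_iff {α : Fin N → ℤ} (hα : Monotone α) {i : Fin N} :
    Decreasable α i ↔ ∀ l, l < i → α l ≤ α i - 1 := by
  rw [Decreasable, monotone_update_iff hα]
  constructor
  · exact fun h => h.1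
  · exact fun h => ⟨h, fun l hl => by have := hα hl.le; linarith⟩

lemma f_lt {α : Fin N → ℤ} (hα : Monotone α) {i j : Fin N} (h : i < j) :
    α i + (i.val : ℤ) + 1 ≤ α j + (j.val : ℤ) := by
  have h1 := hα h.le
  have h2 : (i.val:ℤ) + 1 ≤ (j.val:ℤ) := by exact_mod_cast h
  linarith

lemma f_le {α : Fin N → ℤ} (hα : Monotone α) {i j : Fin N} (h : i ≤ j) :
    α i + (i.val : ℤ) ≤ α j + (j.val : ℤ) := by
  have h1 := hα h
  have h2 : (i.val:ℤ) ≤ (j.val:ℤ) := by exact_mod_cast h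
  linarith

lemma f_inj {α : Fin N → ℤ} (hα : Monotone α) {i j : Fin N}
    (h : α i + (i.val : ℤ) = α j + (j.val : ℤ)) : i = j := by
  by_contra hne
  rcases lt_or_gt_of_ne hne with hl | hl
  · have := f_lt hα hl; linarith
  · have := f_lt hα hl; linarith

lemma dispPlus_pos {Λ : Set ℤ} {α : Fin N → ℤ} {i : Fin N}
    (h : Increasable α i ∧ α i + (i.val : ℤ) + 1 ∈ Λ) : dispPlus Λ α i = α i + 1 := by
  simp only [dispPlus]; rw [if_pos h]

lemma dispPlus_neg {Λ : Set ℤ} {α : Fin N → ℤ} {i : Fin N}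
    (h : ¬(Increasable α i ∧ α i + (i.val : ℤ) + 1 ∈ Λ)) : dispPlus Λ α i = α i := by
  simp only [dispPlus]; rw [if_neg h]

lemma dispMinus_pos {Λ : Set ℤ} {α : Fin N → ℤ} {i : Fin N}
    (h : Decreasable α i ∧ α i + (i.val : ℤ) ∈ Λ) : dispMinus Λ α i = α i - 1 := by
  simp only [dispMinus]; rw [if_pos h]

lemma dispMinus_neg {Λ : Set ℤ} {α : Fin N → ℤ} {i : Fin N}
    (h : ¬(Decreasable α i ∧ α i + (i.val : ℤ) ∈ Λ)) : dispMinus Λ α i = α i := by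
  simp only [dispMinus]; rw [if_neg h]

lemma succ_eq {α : Fin N → ℤ} (hα : Monotone α) {i l : Fin N} (hil : i < l) (he : α l = α i) :
    α ⟨i.val+1, (Nat.succ_le_of_lt hil).trans_lt l.isLt⟩ = α i := by
  refine le_antisymm ?_ (hα (by simp [Fin.le_def]))
  calc α ⟨i.val+1, (Nat.succ_le_of_lt hil).trans_lt l.isLt⟩ ≤ α l := hα (by simp [Fin.le_def]; exact hil)
    _ = α i := he

end TwoLinkHelpers

/-- Characterization of 2-links: `β / α` is a 2-link iff exactly two entries increase by 1,
at indices `j < k`, and the arithmetic progression through `α j + j + 1` with modulus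
`(α k + k) − (α j + j)` meets the loose set of `α` only in `α j + j + 1` and `α k + k + 1`. -/
theorem two_link_iff (r : ℕ) (α β : Fin (r+1) → ℤ) (hα : Monotone α) (hβ : Monotone β)
    (hab : α ≤ β) :
    IsNLink 2 α β ↔
      ∃ j k : Fin (r+1), j < k ∧
        β j = α j + 1 ∧ β k = α k + 1 ∧ (∀ i, i ≠ j → i ≠ k → β i = α i) ∧
        ∀ x ∈ {n : ℤ | n ≡ α j + (j.val : ℤ) + 1
                  [ZMOD ((α k + (k.val : ℤ)) - (α j + (j.val : ℤ)))]} ∩ looseSet α,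
          x = α j + (j.val : ℤ) + 1 ∨ x = α k + (k.val : ℤ) + 1 := by
  constructor
  · rintro ⟨⟨Λ, hAP, hdm, hdp⟩, hsize⟩
    classical
    have hdich : ∀ i, β i = α i + 1 ∨ β i = α i := by
      intro i
      by_cases h : Increasable α i ∧ α i + (i.val:ℤ) + 1 ∈ Λ
      · left; rw [hdp]; exact dispPlus_pos h
      · right; rw [hdp]; exact dispPlus_neg h
    set S : Finset (Fin (r+1)) := Finset.univ.filter (fun i => β i = α i + 1) with hS
    have hmemS : ∀ i, i ∈ S ↔ β i = α i + 1 := by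
      intro i; simp [hS]
    have hcard : S.card = 2 := by
      have h2 : (∑ i, (β i - α i)) = 2 := hsize
      have hterm : ∀ i, β i - α i = if β i = α i + 1 then (1:ℤ) else 0 := by
        intro i
        rcases hdich i with h | h
        · rw [if_pos h, h]; ring
        · rw [if_neg (by simp [h]), h]; ring
      rw [Finset.sum_congr rfl (fun i _ => hterm i), Finset.sum_boole] at h2
      exact_mod_cast h2
    obtain ⟨j, k, hjk, hSjk⟩ : ∃ j k : Fin (r+1), j < k ∧ S = {j, k} := by
      obtain ⟨x, y, hxy, hSxy⟩ := Finset.card_eq_two.mp hcard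
      rcases lt_or_gt_of_ne hxy with h | h
      · exact ⟨x, y, h, hSxy⟩
      · exact ⟨y, x, h, by rw [hSxy, Finset.pair_comm]⟩
    have hbj : β j = α j + 1 := (hmemS j).mp (by rw [hSjk]; exact Finset.mem_insert_self _ _)
    have hbk : β k = α k + 1 := (hmemS k).mp (by rw [hSjk]; simp)
    have hother : ∀ i, i ≠ j → i ≠ k → β i = α i := by
      intro i hij hik
      rcases hdich i with h | h
      · exfalso
        have : i ∈ S := (hmemS i).mpr h
        rw [hSjk] at this
        simp only [Finset.mem_insert, Finset.mem_singleton] at this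
        tauto
      · exact h
    have hcj : Increasable α j ∧ α j + (j.val:ℤ) + 1 ∈ Λ := by
      by_contra h
      have h1 : dispPlus Λ α j = α j := dispPlus_neg h
      rw [← hdp] at h1
      rw [hbj] at h1
      linarith
    have hck : Increasable α k ∧ α k + (k.val:ℤ) + 1 ∈ Λ := by
      by_contra h
      have h1 : dispPlus Λ α k = α k := dispPlus_neg h
      rw [← hdp] at h1
      rw [hbk] at h1
      linarith
    set a : ℤ := α j + (j.val : ℤ) + 1 with ha
    set b : ℤ := α k + (k.val : ℤ) + 1 with hb
    set m₀ : ℤ := (α k + (k.val : ℤ)) - (α j + (j.val : ℤ)) with hm₀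
    have hba : b - a = m₀ := by rw [ha, hb, hm₀]; ring
    have hm1 : 1 ≤ m₀ := by have := f_lt hα hjk; rw [hm₀]; linarith
    obtain ⟨hne, hcase⟩ := hAP
    rcases hcase with h | ⟨n, h⟩ | ⟨n, M, hM2, h⟩
    · exact absurd (h ▸ hcj.2) (Set.notMem_empty _)
    · exfalso
      have ha' : a = n := by have := hcj.2; rw [h] at this; exact this
      have hb' : b = n := by have := hck.2; rw [h] at this; exact this
      have := f_lt hα hjk
      rw [ha, hb] at *
      omega
    · obtain ⟨ta, hta⟩ : ∃ t, a = n + M * t := by have := hcj.2; rw [h] at this; exact this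
      obtain ⟨tb, htb⟩ : ∃ t, b = n + M * t := by have := hck.2; rw [h] at this; exact this
      have hdvdM : b - a = M * (tb - ta) := by rw [hta, htb]; ring
      have htab : 1 ≤ tb - ta := by nlinarith [hba, hm1, hdvdM]
      have hm2 : 2 ≤ m₀ := by nlinarith [hba, hdvdM]
      have hsub : ∀ x : ℤ, x ≡ a [ZMOD m₀] → x ∈ Λ := by
        intro x hx
        have hd : m₀ ∣ a - x := Int.modEq_iff_dvd.mp hx
        obtain ⟨s, hs⟩ := hd
        rw [h]
        refine ⟨ta - (tb - ta) * s, ?_⟩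
        have : a - x = M * (tb - ta) * s := by rw [hs, ← hba, hdvdM]
        linear_combination hta - this
      have hdvd1 : ¬ (m₀ ∣ (1:ℤ)) := by
        intro hd
        have := Int.le_of_dvd one_pos hd
        linarith
      refine ⟨j, k, hjk, hbj, hbk, hother, ?_⟩
      rintro x ⟨hx₀, i, hcase⟩
      have hx₀' : x ≡ a [ZMOD m₀] := hx₀
      have hxΛ : x ∈ Λ := hsub x hx₀'
      have hdvd₀ : m₀ ∣ a - x := Int.modEq_iff_dvd.mp hx₀'
      rcases hcase with ⟨hdec, hxe⟩ | ⟨hinc, hxe⟩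
      · exfalso
        by_cases hij : i = j
        · subst hij
          apply hdvd1
          have he : a - x = 1 := by rw [hxe, ha]; ring
          rwa [he] at hdvd₀
        · by_cases hik : i = k
          · subst hik
            apply hdvd1
            have he : a - x = 1 - m₀ := by rw [hxe, ha, hm₀]; ring
            rw [he] at hdvd₀
            have := dvd_add hdvd₀ (dvd_refl m₀)
            simpa using this
          · by_cases hdecβ : Decreasable β i
            · have hbi : β i = α i := hother i hij hik
              have h1 : α i = β i - 1 := by
                rw [hdm]
                exact dispMinus_pos ⟨hdecβ, by rw [hbi, ← hxe]; exact hxΛ⟩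
              rw [hbi] at h1
              linarith
            · rw [dec_iff hβ] at hdecβ
              push_neg at hdecβ
              obtain ⟨l, hli, hl⟩ := hdecβ
              have hbi : β i = α i := hother i hij hik
              have hal : α l ≤ α i - 1 := (dec_iff hα).mp hdec l hli
              have hbl : β l = α l + 1 ∧ α l = α i - 1 := by
                rcases hdich l with h' | h'
                · refine ⟨h', ?_⟩
                  rw [hbi] at hl
                  rw [h'] at hl
                  linarith
                · exfalso
                  rw [hbi, h'] at hl
                  linarith
              have hlS : l = j ∨ l = k := by
                have : l ∈ S := (hmemS l).mpr hbl.1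
                rw [hSjk] at this
                simpa using this
              have hincl : Increasable α l := by
                rcases hlS with rfl | rfl
                · exact hcj.1
                · exact hck.1
              have hmid : i.val = l.val + 1 := by
                by_contra hc
                have hmlt : l.val + 1 < r + 1 := lt_of_le_of_lt (Nat.succ_le_of_lt hli) i.isLt
                set mid : Fin (r+1) := ⟨l.val+1, hmlt⟩ with hmd
                have h1 : l < mid := by simp [Fin.lt_def, hmd]
                have h2 : mid < i := by
                  have hli' : l.val < i.val := hli
                  simp only [Fin.lt_def, hmd]
                  omega
                have h3 := (inc_iff hα).mp hincl mid h1
                have h4 := (dec_iff hα).mp hdec mid h2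
                linarith [hbl.2]
              have hx2 : x = α l + (l.val:ℤ) + 2 := by
                have hcast : (i.val:ℤ) = (l.val:ℤ) + 1 := by exact_mod_cast hmid
                rw [hxe, hcast]
                linarith [hbl.2]
              rcases hlS with rfl | rfl
              · apply hdvd1
                have he : a - x = -1 := by rw [hx2, ha]; ring
                rw [he] at hdvd₀
                simpa using hdvd₀
              · apply hdvd1
                have he : a - x = -m₀ - 1 := by rw [hx2, ha, hm₀]; ring
                rw [he] at hdvd₀
                have := dvd_add hdvd₀ (dvd_refl m₀)
                have h5 : m₀ ∣ (-1:ℤ) := by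
                  have he2 : (-m₀ - 1) + m₀ = -1 := by ring
                  rwa [he2] at this
                simpa using h5
      · have hbi : β i = α i + 1 := by
          rw [hdp]
          exact dispPlus_pos ⟨hinc, by rw [← hxe]; exact hxΛ⟩
        have hiS : i = j ∨ i = k := by
          have : i ∈ S := (hmemS i).mpr hbi
          rw [hSjk] at this
          simpa using this
        rcases hiS with rfl | rfl
        · left; exact hxe
        · right; exact hxe
  · rintro ⟨j, k, hjk, hbj, hbk, hother, hloose⟩
    set a : ℤ := α j + (j.val : ℤ) + 1 with ha
    set m₀ : ℤ := (α k + (k.val : ℤ)) - (α j + (j.val : ℤ)) with hm₀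
    have hjkv : (j.val : ℤ) < (k.val : ℤ) := by exact_mod_cast hjk
    have hm1 : 1 ≤ m₀ := by have := f_lt hα hjk; rw [hm₀]; linarith
    have hdec0 : Decreasable α 0 := by
      rw [dec_iff hα]
      intro l hl
      exact absurd hl (by simp [Fin.lt_def, Fin.val_zero])
    have hloose0 : (α 0 + ((0 : Fin (r+1)).val : ℤ)) ∈ looseSet α := ⟨0, Or.inl ⟨hdec0, rfl⟩⟩
    have hm2 : 2 ≤ m₀ := by
      by_contra h
      have hm : m₀ = 1 := le_antisymm (by linarith) hm1
      have hmem : (α 0 + ((0 : Fin (r+1)).val : ℤ)) ∈ {n : ℤ | n ≡ a [ZMOD m₀]} := by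
        show _ ≡ a [ZMOD m₀]
        rw [hm]
        exact Int.modEq_one
      have h0j : α 0 ≤ α j := hα (Fin.zero_le j)
      have h0k : α 0 ≤ α k := hα (Fin.zero_le k)
      have hj0 : (0:ℤ) ≤ (j.val : ℤ) := by positivity
      rcases hloose _ ⟨hmem, hloose0⟩ with h' | h' <;>
        simp only [Fin.val_zero, Nat.cast_zero, add_zero] at h'
      · rw [ha] at h'; linarith
      · linarith
    have hincj : Increasable α j := by
      rw [inc_iff hα]
      by_contra h
      push_neg at h
      obtain ⟨l, hjl, hl⟩ := h
      have hle : α l = α j := le_antisymm (by linarith) (hα hjl.le)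
      have hj1e := succ_eq hα hjl hle
      set j1 : Fin (r+1) := ⟨j.val+1, (Nat.succ_le_of_lt hjl).trans_lt l.isLt⟩ with hj1
      have hjj1 : j < j1 := by simp [Fin.lt_def, hj1]
      by_cases hk : j1 = k
      · have hkv : (k.val : ℤ) = (j.val : ℤ) + 1 := by
          rw [← hk]; simp [hj1]
        have hαk : α k = α j := by rw [← hk]; exact hj1e
        rw [hm₀] at hm2
        rw [hαk, hkv] at hm2
        linarith
      · have hbj1 : β j1 = α j1 := hother j1 (by exact (hjj1.ne).symm) hk
        have hmono := hβ hjj1.le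
        rw [hbj, hbj1, hj1e] at hmono
        linarith
    have hinck : Increasable α k := by
      rw [inc_iff hα]
      by_contra h
      push_neg at h
      obtain ⟨l, hkl, hl⟩ := h
      have hle : α l = α k := le_antisymm (by linarith) (hα hkl.le)
      have hk1e := succ_eq hα hkl hle
      set k1 : Fin (r+1) := ⟨k.val+1, (Nat.succ_le_of_lt hkl).trans_lt l.isLt⟩ with hk1
      have hkk1 : k < k1 := by simp [Fin.lt_def, hk1]
      have hbk1 : β k1 = α k1 := hother k1 (by exact ((hjk.trans hkk1).ne).symm) (hkk1.ne).symm
      have hmono := hβ hkk1.le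
      rw [hbk, hbk1, hk1e] at hmono
      linarith
    have hmema : a ∈ {n : ℤ | n ≡ a [ZMOD m₀]} := Int.ModEq.refl a
    have hmemb : α k + (k.val : ℤ) + 1 ∈ {n : ℤ | n ≡ a [ZMOD m₀]} := by
      show _ ≡ a [ZMOD m₀]
      rw [Int.modEq_iff_dvd]
      exact ⟨-1, by rw [ha, hm₀]; ring⟩
    have hAP : IsAP {n : ℤ | n ≡ a [ZMOD m₀]} := by
      constructor
      · intro hU
        have hmem : (a + 1) ∈ {n : ℤ | n ≡ a [ZMOD m₀]} := by rw [hU]; trivial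
        have hd : m₀ ∣ a - (a + 1) := Int.modEq_iff_dvd.mp hmem
        have h1 : m₀ ∣ (1:ℤ) := by
          have : m₀ ∣ (-1 : ℤ) := by simpa using hd
          exact (dvd_neg).mp this
        have := Int.le_of_dvd one_pos h1
        linarith
      · right; right
        refine ⟨a, m₀, hm2, ?_⟩
        ext x
        simp only [Set.mem_setOf_eq, Int.modEq_iff_dvd]
        constructor
        · rintro ⟨t, ht⟩; exact ⟨-t, by linear_combination -ht⟩
        · rintro ⟨t, rfl⟩; exact ⟨-t, by ring⟩
    have hdm : α = dispMinus {n : ℤ | n ≡ a [ZMOD m₀]} β := by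
      funext i
      by_cases hij : i = j
      · subst hij
        have hmem : β i + (i.val:ℤ) ∈ {n : ℤ | n ≡ a [ZMOD m₀]} := by
          have he : β i + (i.val:ℤ) = a := by rw [hbj, ha]; ring
          rw [he]; exact hmema
        have hdec : Decreasable β i := by
          rw [dec_iff hβ]
          intro l hl
          rw [hother l hl.ne (hl.trans hjk).ne, hbj]
          have := hα hl.le
          linarith
        rw [dispMinus_pos ⟨hdec, hmem⟩, hbj]
        ring
      · by_cases hik : i = k
        · subst hik
          have hmem : β i + (i.val:ℤ) ∈ {n : ℤ | n ≡ a [ZMOD m₀]} := by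
            have he : β i + (i.val:ℤ) = α i + (i.val:ℤ) + 1 := by rw [hbk]; ring
            rw [he]; exact hmemb
          have hdec : Decreasable β i := by
            rw [dec_iff hβ]
            intro l hl
            by_cases hlj : l = j
            · subst hlj
              have := (inc_iff hα).mp hincj i hjk
              rw [hbj, hbk]; linarith
            · rw [hother l hlj hl.ne, hbk]
              have := hα hl.le
              linarith
          rw [dispMinus_pos ⟨hdec, hmem⟩, hbk]
          ring
        · have hbi : β i = α i := hother i hij hik
          have hcond : ¬(Decreasable β i ∧ β i + (i.val:ℤ) ∈ {n : ℤ | n ≡ a [ZMOD m₀]}) := by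
            rintro ⟨hdec, hmem⟩
            have hdecα : Decreasable α i := by
              rw [dec_iff hα]
              intro l hl
              have h1 := (dec_iff hβ).mp hdec l hl
              have h2 := hab l
              rw [hbi] at h1
              linarith
            have hmem' : α i + (i.val:ℤ) ∈ {n : ℤ | n ≡ a [ZMOD m₀]} := by rwa [hbi] at hmem
            have hip : ∀ w : Fin (r+1), w < i → α i + (i.val:ℤ) = α w + (w.val:ℤ) + 1 → False := by
              intro w hwi hw
              have hwi' : w.val < i.val := hwi
              have hi1 : i.val - 1 < r + 1 := by omega
              set i0 : Fin (r+1) := ⟨i.val - 1, hi1⟩ with hi0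
              have hi0v : ((i0.val : ℕ) : ℤ) = (i.val : ℤ) - 1 := by
                simp only [hi0]; omega
              have hii0 : i0 < i := by simp only [Fin.lt_def, hi0]; omega
              have h1 : α i0 ≤ α i - 1 := (dec_iff hα).mp hdecα i0 hii0
              have h2 : α i0 + (i0.val:ℤ) < α w + (w.val:ℤ) := by
                rw [hi0v]; linarith
              have h3 : i0 < w := by
                by_contra hc
                push_neg at hc
                have := f_le hα hc
                linarith
              have h4 : i0.val < w.val := h3
              simp only [hi0] at h4
              omega
            rcases hloose _ ⟨hmem', ⟨i, Or.inl ⟨hdecα, rfl⟩⟩⟩ with h' | h'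
            · have hji : j < i := by
                by_contra hc
                push_neg at hc
                have := f_le hα hc
                rw [ha] at h'
                linarith
              exact hip j hji (by rw [← ha]; exact h')
            · have hki : k < i := by
                by_contra hc
                push_neg at hc
                have := f_le hα hc
                linarith
              exact hip k hki h'
          rw [dispMinus_neg hcond]
          exact hbi.symm
    have hdp : β = dispPlus {n : ℤ | n ≡ a [ZMOD m₀]} α := by
      funext i
      by_cases hij : i = j
      · subst hij
        rw [dispPlus_pos ⟨hincj, by rw [← ha]; exact hmema⟩]
        exact hbj
      · by_cases hik : i = k
        · subst hik
          rw [dispPlus_pos ⟨hinck, hmemb⟩]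
          exact hbk
        · have hcond : ¬(Increasable α i ∧ α i + (i.val:ℤ) + 1 ∈ {n : ℤ | n ≡ a [ZMOD m₀]}) := by
            rintro ⟨hinc, hmem⟩
            have hx : α i + (i.val:ℤ) + 1 ∈ looseSet α := ⟨i, Or.inr ⟨hinc, rfl⟩⟩
            rcases hloose _ ⟨hmem, hx⟩ with h' | h'
            · rw [ha] at h'
              exact hij (f_inj hα (by linarith))
            · exact hik (f_inj hα (by linarith))
          rw [dispPlus_neg hcond]
          exact hother i hij hik
    refine ⟨⟨{n : ℤ | n ≡ a [ZMOD m₀]}, hAP, hdm, hdp⟩, ?_⟩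
    show (∑ i, (β i - α i)) = 2
    have hterm : ∀ i, β i - α i = (if i = j then (1:ℤ) else 0) + (if i = k then 1 else 0) := by
      intro i
      by_cases hij : i = j
      · subst hij; rw [if_pos rfl, if_neg hjk.ne, hbj]; ring
      · by_cases hik : i = k
        · subst hik; rw [if_neg hij, if_pos rfl, hbk]; ring
        · rw [if_neg hij, if_neg hik, hother i hij hik]; ring
    rw [Finset.sum_congr rfl (fun i _ => hterm i), Finset.sum_add_distrib]
    simp [Finset.sum_ite_eq']
end

section
/- Let n ≥ a ≥ b ≥ c ≥ 0 be integers with c < b and a < n. If neither n−a nor c+1 is divisible by a−c+2, then τ^n_{a+1,b,c+1} / τ^n_{a,b,c} is a 2-link. -/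
/-- The rank-`(n-1)` ramification sequence `τ^n_{a,b,c} = 0^{n-a} 1^{a-b} 2^{b-c} 3^c`. -/
def tau (n a b c : ℕ) : Fin n → ℤ :=
  fun i => if i.val < n - a then 0 else if i.val < n - b then 1 else
    if i.val < n - c then 2 else 3

lemma increasable_iff {m : ℕ} {α : Fin m → ℤ} (hα : Monotone α) (i : Fin m) :
    Increasable α i ↔ ∀ j, i < j → α i + 1 ≤ α j := by
  constructor
  · intro h j hij
    have h2 := h (le_of_lt hij)
    rwa [Function.update_self, Function.update_of_ne (ne_of_gt hij)] at h2
  · intro h j k hjk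
    rcases eq_or_ne j i with rfl | hj
    · rcases eq_or_ne k j with rfl | hk
      · exact le_rfl
      · rw [Function.update_self, Function.update_of_ne hk]
        exact h k (lt_of_le_of_ne hjk (Ne.symm hk))
    · rw [Function.update_of_ne hj]
      rcases eq_or_ne k i with rfl | hk
      · rw [Function.update_self]
        exact le_trans (hα hjk) (by omega)
      · rw [Function.update_of_ne hk]; exact hα hjk

lemma decreasable_iff {m : ℕ} {α : Fin m → ℤ} (hα : Monotone α) (i : Fin m) :
    Decreasable α i ↔ ∀ j, j < i → α j + 1 ≤ α i := by
  constructor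
  · intro h j hij
    have h2 := h (le_of_lt hij)
    rw [Function.update_self, Function.update_of_ne (ne_of_lt hij)] at h2
    omega
  · intro h j k hjk
    rcases eq_or_ne k i with rfl | hk
    · rcases eq_or_ne j k with rfl | hj
      · exact le_rfl
      · rw [Function.update_self, Function.update_of_ne hj]
        have := h j (lt_of_le_of_ne hjk hj); omega
    · rw [Function.update_of_ne hk]
      rcases eq_or_ne j i with rfl | hj
      · rw [Function.update_self]
        exact le_trans (by omega) (hα hjk)
      · rw [Function.update_of_ne hj]; exact hα hjk

lemma tau_mono (n a b c : ℕ) : Monotone (tau n a b c) := by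
  intro j k h
  have h' : j.val ≤ k.val := h
  simp only [tau]; split_ifs <;> omega

lemma not_incr_of {m : ℕ} {α : Fin m → ℤ} (hα : Monotone α) (i : Fin m) (x : ℕ) (hx : x < m)
    (hix : i.val < x) (hval : α ⟨x, hx⟩ ≤ α i) : ¬ Increasable α i := fun h => by
  have h2 := (increasable_iff hα i).mp h ⟨x, hx⟩ (by rw [Fin.lt_def]; exact hix)
  omega

lemma not_decr_of {m : ℕ} {α : Fin m → ℤ} (hα : Monotone α) (i : Fin m) (x : ℕ) (hx : x < m)
    (hix : x < i.val) (hval : α i ≤ α ⟨x, hx⟩) : ¬ Decreasable α i := fun h => by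
  have h2 := (decreasable_iff hα i).mp h ⟨x, hx⟩ (by rw [Fin.lt_def]; exact hix)
  omega

def Lam (n a c : ℕ) : Set ℤ := {x | ∃ k : ℤ, x = ((n:ℤ) - a) + ((a:ℤ) - c + 2) * k}

lemma mem_Lam {n a c : ℕ} {x : ℤ} (k : ℤ) (h : x = ((n:ℤ) - a) + ((a:ℤ) - c + 2) * k) :
    x ∈ Lam n a c := ⟨k, h⟩

lemma notMem_Lam {n a c : ℕ} {x d : ℤ} (hx : x - ((n:ℤ) - a) = d)
    (hnd : ¬ ((a:ℤ) - c + 2) ∣ d) : x ∉ Lam n a c := by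
  rintro ⟨k, hk⟩; exact hnd ⟨k, by linarith⟩

lemma notMem_Lam' {n a c : ℕ} {x d : ℤ} (hx : x - ((n:ℤ) - a) = d)
    (h0 : 0 < d) (hlt : d < (a:ℤ) - c + 2) : x ∉ Lam n a c :=
  notMem_Lam hx (fun hdvd => by have := Int.le_of_dvd h0 hdvd; omega)


/-- If `c < b`, `a < n`, and neither `n−a` nor `c+1` is divisible by `a−c+2`, then
`τ^n_{a+1,b,c+1} / τ^n_{a,b,c}` is a 2-link. -/
theorem tau_two_link_ac (n a b c : ℕ) (h1 : c < b) (h2 : b ≤ a) (h3 : a < n)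
    (hd1 : ¬ ((a : ℤ) - c + 2 ∣ (n : ℤ) - a)) (hd2 : ¬ ((a : ℤ) - c + 2 ∣ (c : ℤ) + 1)) :
    IsNLink 2 (tau n a b c) (tau n (a+1) b (c+1)) := by
  have monoα := tau_mono n a b c
  have monoβ := tau_mono n (a+1) b (c+1)
  constructor
  · -- Linked
    refine ⟨Lam n a c, ⟨?_, Or.inr (Or.inr ⟨(n:ℤ)-a, (a:ℤ)-c+2, by omega, rfl⟩)⟩, ?_, ?_⟩
    · -- Lam ≠ univ
      intro h
      have hx : ((n:ℤ) - a + 1) ∈ Lam n a c := by rw [h]; trivial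
      exact notMem_Lam' (d := 1) (by ring) (by norm_num) (by omega) hx
    · -- α = dispMinus Λ β
      funext i
      have hvi : i.val < n := i.isLt
      simp only [dispMinus]
      by_cases k1 : i.val < n - a - 1
      · have hβ : tau n (a+1) b (c+1) i = 0 := by simp only [tau]; split_ifs <;> omega
        have hα : tau n a b c i = 0 := by simp only [tau]; split_ifs <;> omega
        rw [hα, hβ]
        by_cases k0 : i.val = 0
        · split_ifs with hc
          · exact absurd hc.2 (notMem_Lam (d := (a:ℤ) - n) (by omega)
              (fun h => hd1 (by rw [show ((n:ℤ) - a) = -((a:ℤ) - n) by ring]; exact dvd_neg.mpr h)))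
          · rfl
        · split_ifs with hc
          · exact absurd hc.1 (not_decr_of monoβ i 0 (by omega) (by omega)
              (by rw [hβ]; simp only [tau]; split_ifs <;> omega))
          · rfl
      · by_cases k2 : i.val = n - a - 1
        · have hβ : tau n (a+1) b (c+1) i = 1 := by simp only [tau]; split_ifs <;> omega
          have hα : tau n a b c i = 0 := by simp only [tau]; split_ifs <;> omega
          have hdec : Decreasable (tau n (a+1) b (c+1)) i :=
            (decreasable_iff monoβ i).mpr (fun j hj => by
              have hj' : j.val < i.val := hj
              simp only [tau]; split_ifs <;> omega)
          rw [hα, hβ]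
          split_ifs with hc
          · omega
          · exact absurd ⟨hdec, mem_Lam 0 (by omega)⟩ hc
        · by_cases k3 : i.val < n - b
          · have hβ : tau n (a+1) b (c+1) i = 1 := by simp only [tau]; split_ifs <;> omega
            have hα : tau n a b c i = 1 := by simp only [tau]; split_ifs <;> omega
            rw [hα, hβ]
            split_ifs with hc
            · exact absurd hc.1 (not_decr_of monoβ i (n-a-1) (by omega) (by omega)
                (by rw [hβ]; simp only [tau]; split_ifs <;> omega))
            · rfl
          · by_cases k4 : i.val = n - c - 1
            · have hβ : tau n (a+1) b (c+1) i = 3 := by simp only [tau]; split_ifs <;> omega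
              have hα : tau n a b c i = 2 := by simp only [tau]; split_ifs <;> omega
              have hdec : Decreasable (tau n (a+1) b (c+1)) i :=
                (decreasable_iff monoβ i).mpr (fun j hj => by
                  have hj' : j.val < i.val := hj
                  simp only [tau]; split_ifs <;> omega)
              rw [hα, hβ]
              split_ifs with hc
              · omega
              · exact absurd ⟨hdec, mem_Lam 1 (by omega)⟩ hc
            · by_cases k5 : i.val < n - c - 1
              · by_cases k6 : i.val = n - b
                · have hβ : tau n (a+1) b (c+1) i = 2 := by simp only [tau]; split_ifs <;> omega
                  have hα : tau n a b c i = 2 := by simp only [tau]; split_ifs <;> omega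
                  rw [hα, hβ]
                  split_ifs with hc
                  · exact absurd hc.2 (notMem_Lam' (d := (a:ℤ) - b + 2)
                      (by omega) (by omega) (by omega))
                  · rfl
                · have hβ : tau n (a+1) b (c+1) i = 2 := by simp only [tau]; split_ifs <;> omega
                  have hα : tau n a b c i = 2 := by simp only [tau]; split_ifs <;> omega
                  rw [hα, hβ]
                  split_ifs with hc
                  · exact absurd hc.1 (not_decr_of monoβ i (n-b) (by omega) (by omega)
                      (by rw [hβ]; simp only [tau]; split_ifs <;> omega))
                  · rfl
              · have hβ : tau n (a+1) b (c+1) i = 3 := by simp only [tau]; split_ifs <;> omega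
                have hα : tau n a b c i = 3 := by simp only [tau]; split_ifs <;> omega
                rw [hα, hβ]
                split_ifs with hc
                · exact absurd hc.1 (not_decr_of monoβ i (n-c-1) (by omega) (by omega)
                    (by rw [hβ]; simp only [tau]; split_ifs <;> omega))
                · rfl
    · -- β = dispPlus Λ α
      funext i
      have hvi : i.val < n := i.isLt
      simp only [dispPlus]
      by_cases p1 : i.val + 1 < n - a
      · have hβ : tau n (a+1) b (c+1) i = 0 := by simp only [tau]; split_ifs <;> omega
        have hα : tau n a b c i = 0 := by simp only [tau]; split_ifs <;> omega
        rw [hα, hβ]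
        split_ifs with hc
        · exact absurd hc.1 (not_incr_of monoα i (i.val+1) (by omega) (by omega)
            (by rw [hα]; simp only [tau]; split_ifs <;> omega))
        · rfl
      · by_cases p2 : i.val + 1 = n - a
        · have hβ : tau n (a+1) b (c+1) i = 1 := by simp only [tau]; split_ifs <;> omega
          have hα : tau n a b c i = 0 := by simp only [tau]; split_ifs <;> omega
          have hinc : Increasable (tau n a b c) i :=
            (increasable_iff monoα i).mpr (fun j hj => by
              have hj' : i.val < j.val := hj
              simp only [tau]; split_ifs <;> omega)
          rw [hα, hβ]
          split_ifs with hc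
          · omega
          · exact absurd ⟨hinc, mem_Lam 0 (by omega)⟩ hc
        · by_cases p3 : i.val + 1 < n - b
          · have hβ : tau n (a+1) b (c+1) i = 1 := by simp only [tau]; split_ifs <;> omega
            have hα : tau n a b c i = 1 := by simp only [tau]; split_ifs <;> omega
            rw [hα, hβ]
            split_ifs with hc
            · exact absurd hc.1 (not_incr_of monoα i (i.val+1) (by omega) (by omega)
                (by rw [hα]; simp only [tau]; split_ifs <;> omega))
            · rfl
          · by_cases p4 : i.val + 1 = n - b
            · have hβ : tau n (a+1) b (c+1) i = 1 := by simp only [tau]; split_ifs <;> omega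
              have hα : tau n a b c i = 1 := by simp only [tau]; split_ifs <;> omega
              rw [hα, hβ]
              split_ifs with hc
              · exact absurd hc.2 (notMem_Lam' (d := (a:ℤ) - b + 1)
                  (by omega) (by omega) (by omega))
              · rfl
            · by_cases p5 : i.val + 1 < n - c
              · have hβ : tau n (a+1) b (c+1) i = 2 := by simp only [tau]; split_ifs <;> omega
                have hα : tau n a b c i = 2 := by simp only [tau]; split_ifs <;> omega
                rw [hα, hβ]
                split_ifs with hc
                · exact absurd hc.1 (not_incr_of monoα i (i.val+1) (by omega) (by omega)
                    (by rw [hα]; simp only [tau]; split_ifs <;> omega))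
                · rfl
              · by_cases p6 : i.val + 1 = n - c
                · have hβ : tau n (a+1) b (c+1) i = 3 := by
                    simp only [tau]; split_ifs <;> omega
                  have hα : tau n a b c i = 2 := by simp only [tau]; split_ifs <;> omega
                  have hinc : Increasable (tau n a b c) i :=
                    (increasable_iff monoα i).mpr (fun j hj => by
                      have hj' : i.val < j.val := hj
                      simp only [tau]; split_ifs <;> omega)
                  rw [hα, hβ]
                  split_ifs with hc
                  · omega
                  · exact absurd ⟨hinc, mem_Lam 1 (by omega)⟩ hc
                · by_cases p7 : i.val + 1 < n
                  · have hβ : tau n (a+1) b (c+1) i = 3 := by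
                      simp only [tau]; split_ifs <;> omega
                    have hα : tau n a b c i = 3 := by simp only [tau]; split_ifs <;> omega
                    rw [hα, hβ]
                    split_ifs with hc
                    · exact absurd hc.1 (not_incr_of monoα i (i.val+1) (by omega) (by omega)
                        (by rw [hα]; simp only [tau]; split_ifs <;> omega))
                    · rfl
                  · have hβ : tau n (a+1) b (c+1) i = 3 := by
                      simp only [tau]; split_ifs <;> omega
                    have hα : tau n a b c i = 3 := by simp only [tau]; split_ifs <;> omega
                    rw [hα, hβ]
                    split_ifs with hc
                    · exact absurd hc.2 (notMem_Lam (d := (a:ℤ) + 3) (by omega)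
                        (fun h => hd2 (by
                          have h2 : ((a:ℤ) + 3) - ((a:ℤ) - c + 2) = (c:ℤ) + 1 := by ring
                          exact h2 ▸ dvd_sub h (dvd_refl _))))
                    · rfl
  · -- skewSize
    have e : skewSize (tau n a b c) (tau n (a+1) b (c+1)) =
        ∑ i ∈ Finset.range n, ((if i = n-a-1 then (1:ℤ) else 0) + (if i = n-c-1 then 1 else 0)) := by
      rw [skewSize, ← Fin.sum_univ_eq_sum_range]
      exact Finset.sum_congr rfl (fun i _ => by simp only [tau]; split_ifs <;> omega)
    rw [e, Finset.sum_add_distrib, Finset.sum_ite_eq' (Finset.range n),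
      Finset.sum_ite_eq' (Finset.range n),
      if_pos (Finset.mem_range.mpr (by omega : n - a - 1 < n)),
      if_pos (Finset.mem_range.mpr (by omega : n - c - 1 < n))]
    norm_num
end
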